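/- For constants k₀ ≠ 0, a, b, the function U(t,x) = a + k₀² / (√(4a² + k₀²) · cosh(z) + 2a), where z = k₀ x − k₀(6a² + k₀²) t + b, is a solution of the mKdV equation U_t + 6U² U_x + U_{xxx} = 0 (on the domain where the denominator is nonzero). -/

import Mathlib

/-!
`U` is a travelling wave `U t x = φ (k₀ x - ω t + b)` with `ω = k₀ (6a² + k₀²)`, so
`U_t = -ω φ'`, `U_x = k₀ φ'` and `U_xxx = k₀³ φ'''`, and the equation reduces to `k₀` times the
profile ODE `k₀² φ''' + (6 φ² - (6a² + k₀²)) φ' = 0` for `φ y = a + k₀² / (s cosh y + 2a)`,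
`s = √(4a² + k₀²)`. Differentiating `φ` three times and clearing denominators, the ODE follows
from `cosh² y = sinh² y + 1` and `s² = 4a² + k₀²`.
-/

open Topology Real

section IteratedDeriv

variable {𝕜 F : Type*} [NontriviallyNormedField 𝕜] [NormedAddCommGroup F] [NormedSpace 𝕜 F]

theorem deriv_comp_mul_add (f : 𝕜 → F) (c d x : 𝕜) :
    deriv (fun x => f (c * x + d)) x = c • deriv f (c * x + d) :=
  (deriv_comp_mul_left c (fun y => f (y + d)) x).trans (by rw [deriv_comp_add_const])

theorem iteratedDeriv_comp_mul_add (f : 𝕜 → F) (c d : 𝕜) (n : ℕ) :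
    iteratedDeriv n (fun x => f (c * x + d)) = fun x => c ^ n • iteratedDeriv n f (c * x + d) := by
  induction n with
  | zero => simp
  | succ n ih =>
    ext x
    rw [iteratedDeriv_succ, ih, deriv_fun_const_smul_field, deriv_comp_mul_add, smul_smul, pow_succ,
      iteratedDeriv_succ]

theorem iteratedDeriv_three_eq_of_hasDerivAt {f f₁ f₂ : 𝕜 → F} {f₃ : F} {x : 𝕜}
    (h₁ : ∀ᶠ y in 𝓝 x, HasDerivAt f (f₁ y) y) (h₂ : ∀ᶠ y in 𝓝 x, HasDerivAt f₁ (f₂ y) y)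
    (h₃ : HasDerivAt f₂ f₃ x) : iteratedDeriv 3 f x = f₃ := by
  have e₁ : deriv f =ᶠ[𝓝 x] f₁ := h₁.mono fun y hy => hy.deriv
  have e₂ : deriv (deriv f) =ᶠ[𝓝 x] f₂ := e₁.deriv.trans (h₂.mono fun y hy => hy.deriv)
  rw [iteratedDeriv_eq_iterate]
  exact e₂.deriv_eq.trans h₃.deriv

end IteratedDeriv

section TravelingWave

variable (f : ℝ → ℝ) (k ω b : ℝ)

theorem deriv_travelingWave_time (x t : ℝ) :
    deriv (fun τ => f (k * x - ω * τ + b)) t = -ω * deriv f (k * x - ω * t + b) := by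
  have hwave : (fun τ => f (k * x - ω * τ + b)) = fun τ => f (-ω * τ + (k * x + b)) := by
    funext τ
    ring_nf
  rw [hwave, deriv_comp_mul_add, smul_eq_mul]
  ring_nf

theorem iteratedDeriv_travelingWave_space (n : ℕ) (x t : ℝ) :
    iteratedDeriv n (fun ξ => f (k * ξ - ω * t + b)) x
      = k ^ n * iteratedDeriv n f (k * x - ω * t + b) := by
  have hwave : (fun ξ => f (k * ξ - ω * t + b)) = fun ξ => f (k * ξ + (b - ω * t)) := by
    funext ξ
    ring_nf
  simp only [hwave, iteratedDeriv_comp_mul_add, smul_eq_mul]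
  ring_nf

theorem deriv_travelingWave_space (x t : ℝ) :
    deriv (fun ξ => f (k * ξ - ω * t + b)) x = k * deriv f (k * x - ω * t + b) := by
  simpa only [iteratedDeriv_one, pow_one] using iteratedDeriv_travelingWave_space f k ω b 1 x t

end TravelingWave

namespace MKdV

variable (k s a : ℝ)

noncomputable def denom (y : ℝ) : ℝ := s * cosh y + 2 * a

noncomputable def profile (y : ℝ) : ℝ := a + k ^ 2 / denom s a y

noncomputable def profile' (y : ℝ) : ℝ := -(k ^ 2 * s * sinh y) / denom s a y ^ 2

noncomputable def profile'' (y : ℝ) : ℝ :=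
  -(k ^ 2 * s) * (cosh y * denom s a y - 2 * s * sinh y ^ 2) / denom s a y ^ 3

noncomputable def profile''' (y : ℝ) : ℝ :=
  -(k ^ 2 * s) * sinh y *
    (denom s a y ^ 2 - 6 * s * cosh y * denom s a y + 6 * s ^ 2 * sinh y ^ 2) / denom s a y ^ 4

theorem hasDerivAt_denom (y : ℝ) : HasDerivAt (denom s a) (s * sinh y) y :=
  ((hasDerivAt_cosh y).const_mul s).add_const (2 * a)

variable {k s a}

theorem continuous_denom : Continuous (denom s a) := by
  unfold denom
  fun_prop

theorem hasDerivAt_profile {y : ℝ} (h : denom s a y ≠ 0) :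
    HasDerivAt (profile k s a) (profile' k s a y) y := by
  refine (((hasDerivAt_const y (k ^ 2)).div (hasDerivAt_denom s a y) h).const_add a).congr_deriv ?_
  rw [profile']
  field_simp
  ring

theorem hasDerivAt_profile' {y : ℝ} (h : denom s a y ≠ 0) :
    HasDerivAt (profile' k s a) (profile'' k s a y) y := by
  have hnum := ((hasDerivAt_sinh y).const_mul (k ^ 2 * s)).neg
  refine (hnum.div ((hasDerivAt_denom s a y).pow 2) (pow_ne_zero _ h)).congr_deriv ?_
  rw [profile'']
  simp only [Pi.neg_apply, Pi.pow_apply]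
  field_simp
  ring

theorem hasDerivAt_profile'' {y : ℝ} (h : denom s a y ≠ 0) :
    HasDerivAt (profile'' k s a) (profile''' k s a y) y := by
  have hnum := (((hasDerivAt_cosh y).mul (hasDerivAt_denom s a y)).sub
    (((hasDerivAt_sinh y).pow 2).const_mul (2 * s))).const_mul (-(k ^ 2 * s))
  refine (hnum.div ((hasDerivAt_denom s a y).pow 3) (pow_ne_zero _ h)).congr_deriv ?_
  rw [profile''']
  simp only [Pi.mul_apply, Pi.sub_apply, Pi.pow_apply]
  field_simp
  ring

theorem iteratedDeriv_three_profile {y : ℝ} (h : denom s a y ≠ 0) :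
    iteratedDeriv 3 (profile k s a) y = profile''' k s a y := by
  have hnear : ∀ᶠ z in 𝓝 y, denom s a z ≠ 0 := continuous_denom.continuousAt.eventually_ne h
  exact iteratedDeriv_three_eq_of_hasDerivAt (hnear.mono fun _ => hasDerivAt_profile)
    (hnear.mono fun _ => hasDerivAt_profile') (hasDerivAt_profile'' h)

theorem profile_ode (hs : s ^ 2 = 4 * a ^ 2 + k ^ 2) {y : ℝ} (h : denom s a y ≠ 0) :
    k ^ 2 * iteratedDeriv 3 (profile k s a) y
      + (6 * profile k s a y ^ 2 - (6 * a ^ 2 + k ^ 2)) * deriv (profile k s a) y = 0 := by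
  rw [iteratedDeriv_three_profile h, (hasDerivAt_profile h).deriv]
  have hcosh : cosh y ^ 2 = sinh y ^ 2 + 1 := by linarith [cosh_sq y]
  unfold profile profile' profile''' denom at *
  field_simp
  linear_combination (6 * k ^ 4 * s * sinh y) * hs + (6 * k ^ 4 * s ^ 3 * sinh y) * hcosh

end MKdV

theorem stmt_4_general (k₀ a b : ℝ) (U : ℝ → ℝ → ℝ)
    (hU : ∀ t x, U t x = a + k₀^2 /
      (Real.sqrt (4 * a^2 + k₀^2) * Real.cosh (k₀ * x - k₀ * (6 * a^2 + k₀^2) * t + b) + 2 * a)) :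
    ∀ t x, Real.sqrt (4 * a^2 + k₀^2) * Real.cosh (k₀ * x - k₀ * (6 * a^2 + k₀^2) * t + b)
        + 2 * a ≠ 0 →
      deriv (fun s => U s x) t + 6 * (U t x)^2 * deriv (U t) x
        + iteratedDeriv 3 (U t) x = 0 := by
  intro t x hD
  have hs : √(4 * a ^ 2 + k₀ ^ 2) ^ 2 = 4 * a ^ 2 + k₀ ^ 2 := Real.sq_sqrt (by positivity)
  obtain rfl : U = fun τ ξ => MKdV.profile k₀ √(4 * a ^ 2 + k₀ ^ 2) a
      (k₀ * ξ - k₀ * (6 * a ^ 2 + k₀ ^ 2) * τ + b) := by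
    funext τ ξ
    exact hU τ ξ
  beta_reduce
  rw [deriv_travelingWave_time, deriv_travelingWave_space, iteratedDeriv_travelingWave_space]
  linear_combination k₀ * MKdV.profile_ode hs hD

/-- One-soliton solution of the mKdV equation `U_t + 6U²U_x + U_{xxx} = 0`. -/
theorem stmt_4 (k₀ a b : ℝ) (hk₀ : k₀ ≠ 0) (U : ℝ → ℝ → ℝ)
    (hU : ∀ t x, U t x = a + k₀^2 /
      (Real.sqrt (4 * a^2 + k₀^2) * Real.cosh (k₀ * x - k₀ * (6 * a^2 + k₀^2) * t + b) + 2 * a)) :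
    ∀ t x, Real.sqrt (4 * a^2 + k₀^2) * Real.cosh (k₀ * x - k₀ * (6 * a^2 + k₀^2) * t + b)
        + 2 * a ≠ 0 →
      deriv (fun s => U s x) t + 6 * (U t x)^2 * deriv (U t) x
        + iteratedDeriv 3 (U t) x = 0 :=
  stmt_4_general k₀ a b U hU
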